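/- Let B be a right-alternative superalgebra that is a central order in B_{2|2}(ν), with Z = Z(B)_0. Then there exists nonzero z ∈ Z with z^4·B contained in the Z-module generated by (1,0), (0,1), [(1,0)], [(0,1)]; consequently B embeds in a finitely generated Z-module. -/

import Mathlib

/-- The swap `(a₁,a₂)* = (a₂,a₁)`. -/
def swp {F : Type*} (a : F × F) : F × F := (a.2, a.1)

/-- `χ(a₁,a₂) = (a₁+a₂, a₁+ν a₂)`. -/
def chi {F : Type*} [Field F] (ν : F) (a : F × F) : F × F :=
  (a.1 + a.2, a.1 + ν * a.2)

/-- The superalgebra `B_{2|2}(ν) = F² ⊕ [F²]`, with `x·y = xy`,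
`[x]·[y] = x·χ(y)`, `x·[y] = [xy]`, `[x]·y = [x·y*]`. -/
def b22Mul (F : Type*) [Field F] (ν : F) :
    ((F × F) × (F × F)) → ((F × F) × (F × F)) → ((F × F) × (F × F)) :=
  fun a b => (a.1 * b.1 + a.2 * chi ν b.2, a.1 * b.2 + a.2 * swp b.1)

/-- The even part of the center of a graded subring `B ⊆ B_{2|2}(ν)`. -/
def b22Center₀ (F : Type*) [Field F] (ν : F) (B : Set ((F × F) × (F × F))) :
    Set ((F × F) × (F × F)) :=
  {z | z ∈ B ∧ z.2 = 0 ∧ (∀ x ∈ B, b22Mul F ν z x = b22Mul F ν x z) ∧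
    ∀ x ∈ B, ∀ y ∈ B,
      b22Mul F ν (b22Mul F ν z x) y = b22Mul F ν z (b22Mul F ν x y) ∧
      b22Mul F ν (b22Mul F ν x z) y = b22Mul F ν x (b22Mul F ν z y) ∧
      b22Mul F ν (b22Mul F ν x y) z = b22Mul F ν x (b22Mul F ν y z)}


/-!
The odd element `z·[(1,1)]` obtained from the localization hypothesis has nonzero odd part, and an
even element commuting with it must have equal diagonal entries; so every element of `Z` is a
scalar `c·1`. Clearing denominators gives one `λ ≠ 0` with `λ·1, λe₁, λe₂, λf₁, λf₂ ∈ B`. For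
`b ∈ B`, products of its even and odd parts with these isolate each coordinate of `b` on one basis
line, and products with `λf₁, λf₂` carry that line onto the scalars. Hence `λ⁴ bᵢ · 1 ∈ Z` for
every coordinate `bᵢ`, and `z = λ·1` works.
-/

namespace B22

variable {F : Type*} [Field F] {ν : F}

local infixl:70 " ⋆ " => b22Mul F ν

lemma mul_apply (x y : (F × F) × (F × F)) :
    x ⋆ y = ((x.1.1 * y.1.1 + x.2.1 * (y.2.1 + y.2.2), x.1.2 * y.1.2 + x.2.2 * (y.2.1 + ν * y.2.2)),
      (x.1.1 * y.2.1 + x.2.1 * y.1.2, x.1.2 * y.2.2 + x.2.2 * y.1.1)) := by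
  simp [b22Mul, chi, swp, Prod.ext_iff]

def scalar (c : F) : (F × F) × (F × F) := ((c, c), 0)

-- `e₁, e₂, f₁, f₂` are the paper's `(1,0), (0,1), [(1,0)], [(0,1)]`.
def e₁ : (F × F) × (F × F) := ((1, 0), 0)

def e₂ : (F × F) × (F × F) := ((0, 1), 0)

def f₁ : (F × F) × (F × F) := (0, (1, 0))

def f₂ : (F × F) × (F × F) := (0, (0, 1))

lemma scalar_ne_zero {c : F} (hc : c ≠ 0) : scalar c ≠ 0 :=
  fun h => hc (congrArg (·.1.1) h)

lemma scalar_mul (c : F) (x : (F × F) × (F × F)) : scalar c ⋆ x = c • x := by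
  ext <;> simp [mul_apply, scalar]

lemma mul_scalar (c : F) (x : (F × F) × (F × F)) : x ⋆ scalar c = c • x := by
  ext <;> simp [mul_apply, scalar, mul_comm]

lemma smul_mul (c : F) (x y : (F × F) × (F × F)) : (c • x) ⋆ y = c • (x ⋆ y) := by
  ext <;> simp [mul_apply] <;> ring

lemma mul_smul (c : F) (x y : (F × F) × (F × F)) : x ⋆ (c • y) = c • (x ⋆ y) := by
  ext <;> simp [mul_apply] <;> ring

lemma scalar_mul_scalar (c d : F) : scalar c ⋆ scalar d = scalar (c * d) := by
  ext <;> simp [mul_apply, scalar]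

lemma iterate_scalar_mul (c : F) (n : ℕ) (x : (F × F) × (F × F)) :
    (fun y => scalar c ⋆ y)^[n] x = c ^ n • x := by
  induction n with
  | zero => simp
  | succ n ih => rw [Function.iterate_succ_apply', ih, scalar_mul, smul_smul, pow_succ']

lemma smul_eq_scalar_mul_basis (c : F) (x : (F × F) × (F × F)) :
    c • x = scalar (c * x.1.1) ⋆ e₁ + scalar (c * x.1.2) ⋆ e₂ +
      scalar (c * x.2.1) ⋆ f₁ + scalar (c * x.2.2) ⋆ f₂ := by
  ext <;> simp [mul_apply, scalar, e₁, e₂, f₁, f₂]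

lemma eq_scalar_of_mul_comm {z x : (F × F) × (F × F)} (hz : z.2 = 0) (hx : x.2 ≠ 0)
    (h : z ⋆ x = x ⋆ z) : z = scalar z.1.1 := by
  have h₁ : (z.1.1 - z.1.2) * x.2.1 = 0 := by
    have := congrArg (·.2.1) h
    simp only [mul_apply, hz, Prod.fst_zero, Prod.snd_zero] at this
    linear_combination this
  have h₂ : (z.1.1 - z.1.2) * x.2.2 = 0 := by
    have := congrArg (·.2.2) h
    simp only [mul_apply, hz, Prod.fst_zero, Prod.snd_zero] at this
    linear_combination -this
  have hdiag : z.1.1 = z.1.2 := by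
    by_contra hne
    have hne' := sub_ne_zero.2 hne
    exact hx (Prod.ext ((mul_eq_zero.1 h₁).resolve_left hne')
      ((mul_eq_zero.1 h₂).resolve_left hne'))
  exact Prod.ext (Prod.ext rfl hdiag.symm) hz

variable {B : Set ((F × F) × (F × F))}

lemma scalar_mem_b22Center₀ {c : F} (h : scalar c ∈ B) : scalar c ∈ b22Center₀ F ν B :=
  ⟨h, rfl, fun x _ => by rw [scalar_mul, mul_scalar], fun x _ y _ =>
    ⟨by rw [scalar_mul, scalar_mul, smul_mul], by rw [mul_scalar, scalar_mul, smul_mul, mul_smul],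
      by rw [mul_scalar, mul_scalar, mul_smul]⟩⟩

lemma scalar_mul_mem (hmul : ∀ a ∈ B, ∀ b ∈ B, a ⋆ b ∈ B) {c d : F} (hc : scalar c ∈ B)
    (hd : scalar d ∈ B) : scalar (c * d) ∈ B :=
  scalar_mul_scalar (ν := ν) c d ▸ hmul _ hc _ hd

lemma exists_mem_snd_ne_zero
    (hloc : ∀ a : (F × F) × (F × F), ∃ z ∈ b22Center₀ F ν B, z ≠ 0 ∧ z ⋆ a ∈ B) :
    ∃ x ∈ B, x.2 ≠ 0 := by
  obtain ⟨z, hz, hz0, hzB⟩ := hloc (0, (1, 1))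
  refine ⟨_, hzB, fun h => hz0 (Prod.ext (Prod.ext ?_ ?_) hz.2.1)⟩
  · simpa [mul_apply, hz.2.1] using congrArg (·.1) h
  · simpa [mul_apply, hz.2.1] using congrArg (·.2) h

lemma eq_scalar_of_mem_b22Center₀
    (hloc : ∀ a : (F × F) × (F × F), ∃ z ∈ b22Center₀ F ν B, z ≠ 0 ∧ z ⋆ a ∈ B)
    {z : (F × F) × (F × F)} (hz : z ∈ b22Center₀ F ν B) : z = scalar z.1.1 := by
  obtain ⟨x, hx, hx2⟩ := exists_mem_snd_ne_zero hloc
  exact eq_scalar_of_mul_comm hz.2.1 hx2 (hz.2.2.1 x hx)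

lemma exists_scalar_smul_mem
    (hloc : ∀ a : (F × F) × (F × F), ∃ z ∈ b22Center₀ F ν B, z ≠ 0 ∧ z ⋆ a ∈ B)
    (a : (F × F) × (F × F)) : ∃ c ≠ 0, scalar c ∈ B ∧ c • a ∈ B := by
  obtain ⟨z, hz, hz0, hza⟩ := hloc a
  have hzc := eq_scalar_of_mem_b22Center₀ hloc hz
  refine ⟨z.1.1, fun h => hz0 ?_, hzc ▸ hz.1, ?_⟩
  · rw [hzc, h]; rfl
  · rwa [hzc, scalar_mul] at hza

lemma exists_scalar_smul_mem_finset (hmul : ∀ a ∈ B, ∀ b ∈ B, a ⋆ b ∈ B)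
    (hloc : ∀ a : (F × F) × (F × F), ∃ z ∈ b22Center₀ F ν B, z ≠ 0 ∧ z ⋆ a ∈ B)
    (s : Finset ((F × F) × (F × F))) : ∃ c ≠ 0, scalar c ∈ B ∧ ∀ a ∈ s, c • a ∈ B := by
  classical
  induction s using Finset.induction_on with
  | empty =>
    obtain ⟨c, hc, hcB, -⟩ := exists_scalar_smul_mem hloc 0
    exact ⟨c, hc, hcB, by simp⟩
  | insert a s _ ih =>
    obtain ⟨c, hc, hcB, hs⟩ := ih
    obtain ⟨d, hd, hdB, ha⟩ := exists_scalar_smul_mem hloc a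
    refine ⟨c * d, mul_ne_zero hc hd, scalar_mul_mem hmul hcB hdB, ?_⟩
    rintro b hb
    rcases Finset.mem_insert.1 hb with rfl | hb
    · simpa only [scalar_mul, smul_smul] using hmul _ hcB _ ha
    · simpa only [scalar_mul, smul_smul, mul_comm] using hmul _ hdB _ (hs b hb)

-- Products with the odd units `f₁, f₂` carry each of the four lines `F e₁, F e₂, F f₁, F f₂`
-- onto both `F e₁` and `F e₂`, whose sum is the scalars.
lemma scalar_mem_of_smul_e₁_mem (hadd : ∀ a ∈ B, ∀ b ∈ B, a + b ∈ B)
    (hmul : ∀ a ∈ B, ∀ b ∈ B, a ⋆ b ∈ B) {l c : F} (hl : scalar l ∈ B) (hf₁ : l • f₁ ∈ B)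
    (hf₂ : l • f₂ ∈ B) (h : c • e₁ ∈ B) : scalar (l * l * c) ∈ B := by
  have key : scalar (l * l * c) = (l • f₂) ⋆ ((c • e₁) ⋆ (l • f₁)) + scalar (l * l) ⋆ (c • e₁) := by
    ext <;> simp [mul_apply, scalar, e₁, f₁, f₂]
    ring
  rw [key]
  exact hadd _ (hmul _ hf₂ _ (hmul _ h _ hf₁)) _ (hmul _ (scalar_mul_mem hmul hl hl) _ h)

lemma scalar_mem_of_smul_e₂_mem (hadd : ∀ a ∈ B, ∀ b ∈ B, a + b ∈ B)
    (hmul : ∀ a ∈ B, ∀ b ∈ B, a ⋆ b ∈ B) {l c : F} (hl : scalar l ∈ B) (hf₁ : l • f₁ ∈ B)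
    (hf₂ : l • f₂ ∈ B) (h : c • e₂ ∈ B) : scalar (l * l * c) ∈ B := by
  have key : scalar (l * l * c) = (l • f₁) ⋆ ((c • e₂) ⋆ (l • f₂)) + scalar (l * l) ⋆ (c • e₂) := by
    ext <;> simp [mul_apply, scalar, e₂, f₁, f₂]
    ring
  rw [key]
  exact hadd _ (hmul _ hf₁ _ (hmul _ h _ hf₂)) _ (hmul _ (scalar_mul_mem hmul hl hl) _ h)

lemma scalar_mem_of_smul_f₁_mem (hadd : ∀ a ∈ B, ∀ b ∈ B, a + b ∈ B)
    (hmul : ∀ a ∈ B, ∀ b ∈ B, a ⋆ b ∈ B) {l c : F} (hf₂ : l • f₂ ∈ B) (h : c • f₁ ∈ B) :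
    scalar (l * c) ∈ B := by
  have key : scalar (l * c) = (l • f₂) ⋆ (c • f₁) + (c • f₁) ⋆ (l • f₂) := by
    ext <;> simp [mul_apply, scalar, f₁, f₂]
    ring
  rw [key]
  exact hadd _ (hmul _ hf₂ _ h) _ (hmul _ h _ hf₂)

lemma scalar_mem_of_smul_f₂_mem (hadd : ∀ a ∈ B, ∀ b ∈ B, a + b ∈ B)
    (hmul : ∀ a ∈ B, ∀ b ∈ B, a ⋆ b ∈ B) {l c : F} (hf₁ : l • f₁ ∈ B) (h : c • f₂ ∈ B) :
    scalar (l * c) ∈ B := by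
  have key : scalar (l * c) = (l • f₁) ⋆ (c • f₂) + (c • f₂) ⋆ (l • f₁) := by
    ext <;> simp [mul_apply, scalar, f₁, f₂]
    ring
  rw [key]
  exact hadd _ (hmul _ hf₁ _ h) _ (hmul _ h _ hf₁)

lemma mk_zero_snd_mem_of_mem (hadd : ∀ a ∈ B, ∀ b ∈ B, a + b ∈ B) (hneg : ∀ a ∈ B, -a ∈ B)
    (heven : ∀ b ∈ B, ((b.1, 0) : (F × F) × (F × F)) ∈ B) {b : (F × F) × (F × F)}
    (hb : b ∈ B) : ((0, b.2) : (F × F) × (F × F)) ∈ B := by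
  have h : b + -(b.1, 0) = (0, b.2) := by ext <;> simp
  exact h ▸ hadd _ hb _ (hneg _ (heven b hb))

lemma scalar_pow_four_mul_coords_mem (hadd : ∀ a ∈ B, ∀ b ∈ B, a + b ∈ B)
    (hneg : ∀ a ∈ B, -a ∈ B) (hmul : ∀ a ∈ B, ∀ b ∈ B, a ⋆ b ∈ B)
    (heven : ∀ b ∈ B, ((b.1, 0) : (F × F) × (F × F)) ∈ B) {l : F} (hl : scalar l ∈ B)
    (he₁ : l • e₁ ∈ B) (he₂ : l • e₂ ∈ B) (hf₁ : l • f₁ ∈ B) (hf₂ : l • f₂ ∈ B)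
    {b : (F × F) × (F × F)} (hb : b ∈ B) :
    scalar (l ^ 4 * b.1.1) ∈ B ∧ scalar (l ^ 4 * b.1.2) ∈ B ∧
      scalar (l ^ 4 * b.2.1) ∈ B ∧ scalar (l ^ 4 * b.2.2) ∈ B := by
  have hb₀ := heven b hb
  have hb₁ := mk_zero_snd_mem_of_mem hadd hneg heven hb
  have hl2 := scalar_mul_mem hmul hl hl
  have h₁ : (l * b.1.1) • e₁ = (b.1, 0) ⋆ (l • e₁) := by
    ext <;> simp [mul_apply, e₁, mul_comm]
  have h₂ : (l * b.1.2) • e₂ = (b.1, 0) ⋆ (l • e₂) := by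
    ext <;> simp [mul_apply, e₂, mul_comm]
  have h₃ : (l * b.2.1) • f₁ = (0, b.2) ⋆ (l • e₂) := by
    ext <;> simp [mul_apply, e₂, f₁, mul_comm]
  have h₄ : (l * b.2.2) • f₂ = (0, b.2) ⋆ (l • e₁) := by
    ext <;> simp [mul_apply, e₁, f₂, mul_comm]
  refine ⟨?_, ?_, ?_, ?_⟩
  · convert scalar_mul_mem hmul hl (scalar_mem_of_smul_e₁_mem hadd hmul hl hf₁ hf₂
      (h₁ ▸ hmul _ hb₀ _ he₁)) using 2
    ring
  · convert scalar_mul_mem hmul hl (scalar_mem_of_smul_e₂_mem hadd hmul hl hf₁ hf₂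
      (h₂ ▸ hmul _ hb₀ _ he₂)) using 2
    ring
  · convert scalar_mul_mem hmul hl2 (scalar_mem_of_smul_f₁_mem hadd hmul hf₂
      (h₃ ▸ hmul _ hb₁ _ he₂)) using 2
    ring
  · convert scalar_mul_mem hmul hl2 (scalar_mem_of_smul_f₂_mem hadd hmul hf₁
      (h₄ ▸ hmul _ hb₁ _ he₁)) using 2
    ring

end B22

open B22 in
theorem b22_central_order_embeds_general (F : Type*) [Field F] (ν : F)
    (B : Set ((F × F) × (F × F)))
    (haddB : ∀ a ∈ B, ∀ b ∈ B, a + b ∈ B) (hnegB : ∀ a ∈ B, -a ∈ B)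
    (hmulB : ∀ a ∈ B, ∀ b ∈ B, b22Mul F ν a b ∈ B)
    (hgraded : ∀ b ∈ B, ((b.1, 0) : (F × F) × (F × F)) ∈ B)
    (hloc : ∀ a : (F × F) × (F × F),
      ∃ z ∈ b22Center₀ F ν B, z ≠ 0 ∧ b22Mul F ν z a ∈ B) :
    ∃ z ∈ b22Center₀ F ν B, z ≠ 0 ∧
      ∀ b ∈ B, ∃ c₁ c₂ c₃ c₄ : (F × F) × (F × F),
        c₁ ∈ b22Center₀ F ν B ∧ c₂ ∈ b22Center₀ F ν B ∧
        c₃ ∈ b22Center₀ F ν B ∧ c₄ ∈ b22Center₀ F ν B ∧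
        (fun x => b22Mul F ν z x)^[4] b =
          b22Mul F ν c₁ ((((1 : F), (0 : F)), 0) : (F × F) × (F × F)) +
          b22Mul F ν c₂ ((((0 : F), (1 : F)), 0) : (F × F) × (F × F)) +
          b22Mul F ν c₃ ((0, ((1 : F), (0 : F))) : (F × F) × (F × F)) +
          b22Mul F ν c₄ ((0, ((0 : F), (1 : F))) : (F × F) × (F × F)) := by
  classical
  obtain ⟨l, hl, hlB, hbasis⟩ := exists_scalar_smul_mem_finset hmulB hloc {e₁, e₂, f₁, f₂}
  refine ⟨scalar l, scalar_mem_b22Center₀ hlB, scalar_ne_zero hl, fun b hb => ?_⟩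
  obtain ⟨h₁, h₂, h₃, h₄⟩ := scalar_pow_four_mul_coords_mem haddB hnegB hmulB hgraded hlB
    (hbasis e₁ (by simp)) (hbasis e₂ (by simp)) (hbasis f₁ (by simp)) (hbasis f₂ (by simp)) hb
  exact ⟨_, _, _, _, scalar_mem_b22Center₀ h₁, scalar_mem_b22Center₀ h₂,
    scalar_mem_b22Center₀ h₃, scalar_mem_b22Center₀ h₄,
    (iterate_scalar_mul l 4 b).trans (smul_eq_scalar_mul_basis (l ^ 4) b)⟩

/-- If `B` is a right-alternative superalgebra which is a central order in
`B_{2|2}(ν)`, with `Z = Z(B)₀`, then there is a nonzero `z ∈ Z` such that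
`z⁴·B` lies in the `Z`-module generated by `(1,0), (0,1), [(1,0)],
[(0,1)]`; consequently `B` embeds in a finitely generated `Z`-module. -/
theorem b22_central_order_embeds (F : Type*) [Field F] (ν : F)
    (B : Set ((F × F) × (F × F)))
    (haddB : ∀ a ∈ B, ∀ b ∈ B, a + b ∈ B) (hnegB : ∀ a ∈ B, -a ∈ B)
    (hmulB : ∀ a ∈ B, ∀ b ∈ B, b22Mul F ν a b ∈ B)
    (hgraded : ∀ b ∈ B, ((b.1, 0) : (F × F) × (F × F)) ∈ B)
    (hnzd : ∀ z ∈ b22Center₀ F ν B, z ≠ 0 → ∀ b ∈ B, b22Mul F ν z b = 0 → b = 0)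
    (hloc : ∀ a : (F × F) × (F × F),
      ∃ z ∈ b22Center₀ F ν B, z ≠ 0 ∧ b22Mul F ν z a ∈ B) :
    ∃ z ∈ b22Center₀ F ν B, z ≠ 0 ∧
      ∀ b ∈ B, ∃ c₁ c₂ c₃ c₄ : (F × F) × (F × F),
        c₁ ∈ b22Center₀ F ν B ∧ c₂ ∈ b22Center₀ F ν B ∧
        c₃ ∈ b22Center₀ F ν B ∧ c₄ ∈ b22Center₀ F ν B ∧
        (fun x => b22Mul F ν z x)^[4] b =
          b22Mul F ν c₁ ((((1 : F), (0 : F)), 0) : (F × F) × (F × F)) +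
          b22Mul F ν c₂ ((((0 : F), (1 : F)), 0) : (F × F) × (F × F)) +
          b22Mul F ν c₃ ((0, ((1 : F), (0 : F))) : (F × F) × (F × F)) +
          b22Mul F ν c₄ ((0, ((0 : F), (1 : F))) : (F × F) × (F × F)) :=
  b22_central_order_embeds_general F ν B haddB hnegB hmulB hgraded hloc
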